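/- arXiv:1411.0183 — 3 statements merged into one kernel-verified Lean document; each statement's English description precedes it below -/
import Mathlib

section
/- Let $(Z_n)_{n \geq 1}$ be a sequence of real numbers (log-likelihood ratios). Define the CuSum recursion $C_0 = 0$, $C_{n+1} = \max\{0, C_n + Z_{n+1}\}$, and the DE-CuSum recursion with parameters $\mu > 0$, $h \geq 0$: $W_0 = 0$, and $W_{n+1} = \min\{W_n + \mu, 0\}$ if $W_n < 0$, while $W_{n+1} = \max\{W_n + Z_{n+1}, -h\}$ if $W_n \geq 0$. Then $C_n \geq W_n$ for all $n \geq 0$. -/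
theorem deCusum_step_le_cusum_step {w c z μ h : ℝ} (hh : 0 ≤ h) (hwc : w ≤ c) :
    (if w < 0 then min (w + μ) 0 else max (w + z) (-h)) ≤ max 0 (c + z) := by
  split_ifs
  · exact (min_le_right _ _).trans (le_max_left _ _)
  · exact max_le ((add_le_add_left hwc z).trans (le_max_right _ _))
      ((neg_nonpos.mpr hh).trans (le_max_left _ _))

theorem stmt_3_general (Z : ℕ → ℝ) (μ h : ℝ) (hh : 0 ≤ h)
    (C W : ℕ → ℝ) (hC0 : C 0 = 0)
    (hC : ∀ n, C (n + 1) = max 0 (C n + Z (n + 1)))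
    (hW0 : W 0 = 0)
    (hW : ∀ n, W (n + 1) =
      if W n < 0 then min (W n + μ) 0 else max (W n + Z (n + 1)) (-h)) :
    ∀ n, W n ≤ C n := by
  intro n
  induction n with
  | zero => rw [hC0, hW0]
  | succ k ih =>
    rw [hW k, hC k]
    exact deCusum_step_le_cusum_step hh ih

/-- Pathwise domination of the DE-CuSum statistic by the CuSum statistic:
for any common input sequence `Z`, with `C₀ = W₀ = 0`,
`C_{n+1} = max {0, C_n + Z_{n+1}}` and the DE-CuSum recursion with parameters
`μ > 0`, `h ≥ 0`, we have `C_n ≥ W_n` for all `n`. -/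
theorem stmt_3 (Z : ℕ → ℝ) (μ h : ℝ) (hμ : 0 < μ) (hh : 0 ≤ h)
    (C W : ℕ → ℝ) (hC0 : C 0 = 0)
    (hC : ∀ n, C (n + 1) = max 0 (C n + Z (n + 1)))
    (hW0 : W 0 = 0)
    (hW : ∀ n, W (n + 1) =
      if W n < 0 then min (W n + μ) 0 else max (W n + Z (n + 1)) (-h)) :
    ∀ n, W n ≤ C n :=
  stmt_3_general Z μ h hh C W hC0 hC hW0 hW
end

section
/- Let $X_1, X_2, \dots$ be i.i.d. with mean $-D < 0$, let $\tau_-$ be the first time the partial sum $\sum_{k=1}^n X_k$ is negative, and let $S_{\tau_-}$ be the value of the partial sum at that time. Define the skip duration $V = \lceil |S_{\tau_-}| / \mu \rceil$ for $\mu > 0$. Then the pre-change duty cycle $\mathrm{PDC} = \frac{\mathbb{E}[\tau_-]}{\mathbb{E}[\tau_-] + \mathbb{E}[V]}$ satisfies $\mathrm{PDC} \leq \frac{\mu}{\mu + D}$. -/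
/-!
Write `S n = X 0 + ⋯ + X (n - 1)` and `τ` for the first `n ≥ 1` with `S n < 0`. The strong law
makes `τ` finite almost surely, and then `{k < τ}` depends only on `X 0, …, X (k - 1)`, so it is
independent of `X k`; summing `𝔼[X k; k < τ] = -D ℙ(k < τ)` over `k < n` gives
`𝔼[S (τ ∧ n)] = -D 𝔼[τ ∧ n]`, and letting `n → ∞` yields Wald's inequality `𝔼[S τ] ≤ -D 𝔼[τ]`.
Since `V ≥ |S τ| / μ`, this gives `μ 𝔼[V] ≥ 𝔼|S τ| ≥ D 𝔼[τ]`, and the bound follows.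
-/

open MeasureTheory ProbabilityTheory Finset Filter Topology

lemma div_add_le_div_add_of_mul_le {a b c d : ℝ} (ha : 0 ≤ a) (hb : 0 ≤ b) (hc : 0 < c)
    (hd : 0 < d) (h : d * a ≤ c * b) : a / (a + b) ≤ c / (c + d) := by
  rcases (add_nonneg ha hb).eq_or_lt with hzero | hpos
  · rw [← hzero, div_zero]
    positivity
  · rw [div_le_div_iff₀ hpos (by positivity)]
    linarith

section Independence

variable {Ω : Type*} {mΩ : MeasurableSpace Ω} {P : Measure Ω}

theorem ProbabilityTheory.Indep.integral_indicator_eq_mul [IsFiniteMeasure P]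
    {m₁ m₂ : MeasurableSpace Ω} (hle₁ : m₁ ≤ mΩ) (hle₂ : m₂ ≤ mΩ) (hindep : Indep m₁ m₂ P)
    {f : Ω → ℝ} (hf : StronglyMeasurable[m₁] f) (hfi : Integrable f P) {B : Set Ω}
    (hB : MeasurableSet[m₂] B) :
    ∫ ω, B.indicator f ω ∂P = (∫ ω, f ω ∂P) * P.real B := by
  calc ∫ ω, B.indicator f ω ∂P = ∫ ω in B, (P[f | m₂]) ω ∂P := by
        rw [integral_indicator (hle₂ B hB), setIntegral_condExp hle₂ hfi hB]
    _ = ∫ ω in B, (∫ ω, f ω ∂P) ∂P :=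
        setIntegral_congr_ae (hle₂ B hB)
          ((condExp_indep_eq hle₁ hle₂ hf hindep).mono fun _ h _ => h)
    _ = (∫ ω, f ω ∂P) * P.real B := by rw [setIntegral_const, smul_eq_mul, mul_comm]

theorem ProbabilityTheory.iIndepFun.integral_indicator_eq_mul [IsFiniteMeasure P]
    {X : ℕ → Ω → ℝ} (hX : ∀ i, Measurable (X i)) (hindep : iIndepFun X P) {k : ℕ}
    (hk : Integrable (X k) P) {B : Set Ω}
    (hB : MeasurableSet[⨆ i ∈ Set.Iio k, MeasurableSpace.comap (X i) inferInstance] B) :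
    ∫ ω, B.indicator (X k) ω ∂P = (∫ ω, X k ω ∂P) * P.real B := by
  have hle : ∀ i, MeasurableSpace.comap (X i) inferInstance ≤ mΩ := fun i => (hX i).comap_le
  refine Indep.integral_indicator_eq_mul (hle k) (iSup₂_le fun i _ => hle i) ?_
    (comap_measurable (X k)).stronglyMeasurable hk hB
  refine indep_of_indep_of_le_left (indep_iSup_of_disjoint hle hindep.iIndep
    (Set.disjoint_singleton_left.2 (lt_irrefl k))) ?_
  exact le_iSup₂ (f := fun i (_ : i ∈ ({k} : Set ℕ)) => MeasurableSpace.comap (X i) inferInstance)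
    k rfl

theorem ae_exists_sum_range_neg {X : ℕ → Ω → ℝ} (hindep : Pairwise fun i j => X i ⟂ᵢ[P] X j)
    (hident : ∀ i, IdentDistrib (X i) (X 0) P P) (hneg : ∫ ω, X 0 ω ∂P < 0) :
    ∀ᵐ ω ∂P, ∃ n, 1 ≤ n ∧ ∑ i ∈ range n, X i ω < 0 := by
  filter_upwards [strong_law_ae X (Integrable.of_integral_ne_zero hneg.ne) hindep hident]
    with ω hω
  obtain ⟨n, hn_neg, hn⟩ :=
    ((hω.eventually_lt_const hneg).and (eventually_ge_atTop 1)).exists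
  exact ⟨n, hn, neg_of_smul_neg_left hn_neg (by positivity)⟩

end Independence

section StoppedSums

variable {Ω : Type*} {mΩ : MeasurableSpace Ω} {P : Measure Ω} {X : ℕ → Ω → ℝ} {τ : Ω → ℕ}

theorem measurable_sum_range_apply (hX : ∀ i, Measurable (X i)) (hτ : Measurable τ) :
    Measurable fun ω => ∑ i ∈ range (τ ω), X i ω :=
  (measurable_from_prod_countable_left (f := fun p : Ω × ℕ => ∑ i ∈ range p.2, X i p.1)
    fun n => Finset.measurable_sum (range n) fun i _ => hX i).comp (measurable_id.prodMk hτ)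

theorem sum_indicator_lt_eq_sum_range_min (τ : Ω → ℕ) (n : ℕ) (ω : Ω) :
    ∑ k ∈ range n, {ω | k < τ ω}.indicator (X k) ω = ∑ k ∈ range (min (τ ω) n), X k ω := by
  simp only [Set.indicator_apply]
  rw [← sum_filter]
  congr 1
  ext k
  simp only [mem_filter, mem_range, Set.mem_ofPred_eq]
  omega

theorem integral_min_eq_sum_measureReal [IsFiniteMeasure P] (hτ : Measurable τ) (n : ℕ) :
    ∫ ω, ((min (τ ω) n : ℕ) : ℝ) ∂P = ∑ k ∈ range n, P.real {ω | k < τ ω} := by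
  have hcount (ω : Ω) := sum_indicator_lt_eq_sum_range_min (X := fun _ _ => (1 : ℝ)) τ n ω
  simp only [sum_const, card_range, nsmul_eq_mul, mul_one] at hcount
  simp_rw [← hcount]
  rw [integral_finsetSum _ fun k _ => (integrable_const 1).indicator (hτ measurableSet_Ioi)]
  exact sum_congr rfl fun k _ => integral_indicator_one (hτ measurableSet_Ioi)

theorem integrable_sum_range_min (hτ : Measurable τ) (hX : ∀ i, Integrable (X i) P) (n : ℕ) :
    Integrable (fun ω => ∑ k ∈ range (min (τ ω) n), X k ω) P := by
  simp_rw [← sum_indicator_lt_eq_sum_range_min]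
  exact integrable_finsetSum _ fun k _ => (hX k).indicator (hτ measurableSet_Ioi)

theorem tendsto_integral_min_atTop (hτ : Measurable τ) (hτi : Integrable (fun ω => (τ ω : ℝ)) P) :
    Tendsto (fun n => ∫ ω, ((min (τ ω) n : ℕ) : ℝ) ∂P) atTop (𝓝 (∫ ω, (τ ω : ℝ) ∂P)) := by
  refine tendsto_integral_of_dominated_convergence _ (fun n => ?_) hτi (fun n => ?_) ?_
  · exact ((measurable_from_top (f := fun m : ℕ => ((min m n : ℕ) : ℝ))).comp
      hτ).aestronglyMeasurable
  · refine Eventually.of_forall fun ω => ?_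
    rw [Real.norm_natCast]
    exact_mod_cast min_le_left _ _
  · refine Eventually.of_forall fun ω =>
      tendsto_atTop_of_eventually_const (i₀ := τ ω) fun n hn => ?_
    rw [min_eq_left hn]

theorem tendsto_integral_indicator_le_atTop (hτ : Measurable τ) {f : Ω → ℝ}
    (hf : Integrable f P) :
    Tendsto (fun n : ℕ => ∫ ω, {ω | τ ω ≤ n}.indicator f ω ∂P) atTop (𝓝 (∫ ω, f ω ∂P)) := by
  have hunion : (⋃ n : ℕ, {ω | τ ω ≤ n}) = Set.univ :=
    Set.iUnion_eq_univ_iff.2 fun ω => ⟨τ ω, show τ ω ≤ τ ω from le_rfl⟩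
  have hlim := tendsto_setIntegral_of_monotone (μ := P) (f := f)
    (s := fun n : ℕ => {ω | τ ω ≤ n}) (fun n => hτ measurableSet_Iic)
    (fun m n hmn ω (h : τ ω ≤ m) => h.trans hmn) (by rw [hunion]; exact hf.integrableOn)
  simp_rw [hunion, Measure.restrict_univ] at hlim
  exact hlim.congr fun n => (integral_indicator (hτ measurableSet_Iic)).symm

end StoppedSums

section LadderEpoch

variable {Ω : Type*}

-- `sInf ∅ = 0`: a path whose partial sums never become negative has epoch `0`.
noncomputable def ladderEpoch (X : ℕ → Ω → ℝ) (ω : Ω) : ℕ :=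
  sInf {n | 1 ≤ n ∧ ∑ k ∈ range n, X k ω < 0}

variable {X : ℕ → Ω → ℝ}

theorem lt_ladderEpoch_iff {k : ℕ} {ω : Ω} :
    k < ladderEpoch X ω ↔ (∃ n, 1 ≤ n ∧ ∑ i ∈ range n, X i ω < 0) ∧
      ∀ j ∈ Icc 1 k, 0 ≤ ∑ i ∈ range j, X i ω := by
  rcases Set.eq_empty_or_nonempty {n | 1 ≤ n ∧ ∑ i ∈ range n, X i ω < 0} with hempty | hne
  · simp only [ladderEpoch, hempty, Nat.sInf_empty, Nat.not_lt_zero, false_iff, not_and]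
    intro ⟨n, hn⟩
    exact absurd hn (Set.eq_empty_iff_forall_notMem.mp hempty n)
  · rw [ladderEpoch, ← Nat.succ_le_iff, le_csInf_iff' hne]
    refine ⟨fun h => ⟨hne, fun j hj => ?_⟩, fun h j ⟨hj₁, hj⟩ => ?_⟩
    · obtain ⟨hj₁, hjk⟩ := mem_Icc.1 hj
      by_contra hneg
      have := h ⟨hj₁, not_le.1 hneg⟩
      omega
    · by_contra hlt
      exact (h.2 j (mem_Icc.2 ⟨hj₁, by omega⟩)).not_gt hj

theorem indicator_le_sum_range_min_ladderEpoch (n : ℕ) (ω : Ω) :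
    {ω | ladderEpoch X ω ≤ n}.indicator (fun ω => ∑ i ∈ range (ladderEpoch X ω), X i ω) ω ≤
      ∑ i ∈ range (min (ladderEpoch X ω) n), X i ω := by
  by_cases h : ladderEpoch X ω ≤ n
  · rw [Set.indicator_of_mem (show ω ∈ {ω | ladderEpoch X ω ≤ n} from h), min_eq_left h]
  · rw [Set.indicator_of_notMem (show ω ∉ {ω | ladderEpoch X ω ≤ n} from h),
      min_eq_right (not_le.1 h).le]
    rcases Nat.eq_zero_or_pos n with rfl | hn
    · simp
    · exact (lt_ladderEpoch_iff.1 (not_le.1 h)).2 n (mem_Icc.2 ⟨hn, le_rfl⟩)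

variable {mΩ : MeasurableSpace Ω} {P : Measure Ω} [IsFiniteMeasure P]

theorem measurableSet_lt_ladderEpoch (hX : ∀ i, Measurable (X i)) (k : ℕ) :
    MeasurableSet {ω | k < ladderEpoch X ω} := by
  simp_rw [lt_ladderEpoch_iff]
  measurability

theorem measurable_ladderEpoch (hX : ∀ i, Measurable (X i)) : Measurable (ladderEpoch X) :=
  measurable_of_Ioi (measurableSet_lt_ladderEpoch hX)

theorem integral_indicator_lt_ladderEpoch (hX : ∀ i, Measurable (X i)) (hindep : iIndepFun X P)
    (hfin : ∀ᵐ ω ∂P, ∃ n, 1 ≤ n ∧ ∑ i ∈ range n, X i ω < 0) {k : ℕ} (hk : Integrable (X k) P) :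
    ∫ ω, {ω | k < ladderEpoch X ω}.indicator (X k) ω ∂P =
      (∫ ω, X k ω ∂P) * P.real {ω | k < ladderEpoch X ω} := by
  -- Off a null set, `k < ladderEpoch X` is decided by `X 0, …, X (k - 1)`.
  set B := ⋂ j ∈ Icc 1 k, {ω | 0 ≤ ∑ i ∈ range j, X i ω}
  have hae : {ω | k < ladderEpoch X ω} =ᵐ[P] B := by
    filter_upwards [hfin] with ω hω
    change (k < ladderEpoch X ω) = (ω ∈ B)
    simp [B, lt_ladderEpoch_iff, hω]
  have hB : MeasurableSet[⨆ i ∈ Set.Iio k, MeasurableSpace.comap (X i) inferInstance] B := by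
    refine Finset.measurableSet_biInter _ fun j hj => measurableSet_le measurable_const ?_
    refine Finset.measurable_sum _ fun i hi => (comap_measurable (X i)).mono ?_ le_rfl
    exact le_iSup₂ (f := fun i (_ : i ∈ Set.Iio k) => MeasurableSpace.comap (X i) inferInstance) i
      (by simp only [mem_range, mem_Icc] at hi hj; exact Set.mem_Iio.2 (by omega))
  rw [integral_congr_ae (indicator_ae_eq_of_ae_eq_set hae), measureReal_congr hae]
  exact hindep.integral_indicator_eq_mul hX hk hB

theorem integral_sum_range_min_ladderEpoch (hX : ∀ i, Measurable (X i)) (hindep : iIndepFun X P)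
    (hident : ∀ i, IdentDistrib (X i) (X 0) P P) (hint : ∀ i, Integrable (X i) P)
    (hfin : ∀ᵐ ω ∂P, ∃ n, 1 ≤ n ∧ ∑ i ∈ range n, X i ω < 0) (n : ℕ) :
    ∫ ω, ∑ i ∈ range (min (ladderEpoch X ω) n), X i ω ∂P =
      (∫ ω, X 0 ω ∂P) * ∫ ω, ((min (ladderEpoch X ω) n : ℕ) : ℝ) ∂P := by
  simp_rw [← sum_indicator_lt_eq_sum_range_min]
  rw [integral_finsetSum _ fun k _ => (hint k).indicator (measurableSet_lt_ladderEpoch hX k),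
    integral_min_eq_sum_measureReal (measurable_ladderEpoch hX), mul_sum]
  refine sum_congr rfl fun k _ => ?_
  rw [integral_indicator_lt_ladderEpoch hX hindep hfin (hint k), (hident k).integral_eq]

-- Truncating at `n`: `S_τ 1{τ ≤ n} ≤ S_{τ ∧ n}` because `S_n ≥ 0` on `{n < τ}`, so the limit
-- `n → ∞` needs no uniform integrability of `S_{τ ∧ n}`.
theorem integral_sum_range_ladderEpoch_le (hX : ∀ i, Measurable (X i)) (hindep : iIndepFun X P)
    (hident : ∀ i, IdentDistrib (X i) (X 0) P P) (hneg : ∫ ω, X 0 ω ∂P < 0)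
    (hτi : Integrable (fun ω => (ladderEpoch X ω : ℝ)) P)
    (hS : Integrable (fun ω => ∑ i ∈ range (ladderEpoch X ω), X i ω) P) :
    ∫ ω, ∑ i ∈ range (ladderEpoch X ω), X i ω ∂P ≤
      (∫ ω, X 0 ω ∂P) * ∫ ω, (ladderEpoch X ω : ℝ) ∂P := by
  have hτ := measurable_ladderEpoch hX
  have hint (i : ℕ) : Integrable (X i) P :=
    (hident i).integrable_iff.2 (Integrable.of_integral_ne_zero hneg.ne)
  have hfin := ae_exists_sum_range_neg (fun i j hij => hindep.indepFun hij) hident hneg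
  refine le_of_tendsto_of_tendsto (tendsto_integral_indicator_le_atTop hτ hS)
    ((tendsto_integral_min_atTop hτ hτi).const_mul _) (Eventually.of_forall fun n => ?_)
  calc _ ≤ ∫ ω, ∑ i ∈ range (min (ladderEpoch X ω) n), X i ω ∂P :=
        integral_mono (hS.indicator (hτ measurableSet_Iic)) (integrable_sum_range_min hτ hint n)
          (indicator_le_sum_range_min_ladderEpoch n)
    _ = _ := integral_sum_range_min_ladderEpoch hX hindep hident hint hfin n

end LadderEpoch

theorem stmt_9_general {Ω : Type*} [MeasurableSpace Ω] (P : Measure Ω) [IsProbabilityMeasure P]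
    (X : ℕ → Ω → ℝ) (hmeas : ∀ k, Measurable (X k))
    (hindep : ProbabilityTheory.iIndepFun X P)
    (hident : ∀ k, ProbabilityTheory.IdentDistrib (X k) (X 0) P P)
    (D : ℝ) (hD : 0 < D) (hmean : ∫ ω, X 0 ω ∂P = -D)
    (μ : ℝ) (hμ : 0 < μ)
    (τ : Ω → ℕ)
    (hτ : ∀ ω, τ ω = sInf {n | 1 ≤ n ∧ ∑ k ∈ Finset.range n, X k ω < 0})
    (hτint : Integrable (fun ω => (τ ω : ℝ)) P)
    (hSint : Integrable (fun ω => |∑ k ∈ Finset.range (τ ω), X k ω|) P)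
    (V : Ω → ℕ)
    (hV : ∀ ω, V ω = ⌈|∑ k ∈ Finset.range (τ ω), X k ω| / μ⌉₊)
    (hVint : Integrable (fun ω => (V ω : ℝ)) P) :
    (∫ ω, (τ ω : ℝ) ∂P) / ((∫ ω, (τ ω : ℝ) ∂P) + ∫ ω, (V ω : ℝ) ∂P) ≤ μ / (μ + D) := by
  obtain rfl : τ = ladderEpoch X := funext hτ
  have hS : Integrable (fun ω => ∑ k ∈ range (ladderEpoch X ω), X k ω) P :=
    (integrable_norm_iff (measurable_sum_range_apply hmeas
      (measurable_ladderEpoch hmeas)).aestronglyMeasurable).1 hSint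
  have hwald := integral_sum_range_ladderEpoch_le hmeas hindep hident (by linarith) hτint hS
  have habs : -∫ ω, ∑ k ∈ range (ladderEpoch X ω), X k ω ∂P ≤
      ∫ ω, |∑ k ∈ range (ladderEpoch X ω), X k ω| ∂P := by
    rw [← integral_neg]
    exact integral_mono hS.neg hSint fun ω => neg_le_abs _
  have hceil : ∫ ω, |∑ k ∈ range (ladderEpoch X ω), X k ω| ∂P ≤ μ * ∫ ω, (V ω : ℝ) ∂P := by
    rw [← div_le_iff₀' hμ, ← integral_div]
    exact integral_mono (hSint.div_const μ) hVint fun ω => (hV ω).symm ▸ Nat.le_ceil _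
  refine div_add_le_div_add_of_mul_le (integral_nonneg fun ω => by positivity)
    (integral_nonneg fun ω => by positivity) hμ hD ?_
  rw [hmean] at hwald
  linarith

/-- PDC bound for the DE-CuSum algorithm with `h = ∞`: for i.i.d. increments with mean
`-D < 0`, ladder epoch `τ₋` and skip duration `V = ⌈|S_{τ₋}|/μ⌉`, the pre-change duty
cycle `PDC = 𝔼[τ₋] / (𝔼[τ₋] + 𝔼[V])` satisfies `PDC ≤ μ / (μ + D)`. -/
theorem stmt_9 {Ω : Type*} [MeasurableSpace Ω] (P : Measure Ω) [IsProbabilityMeasure P]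
    (X : ℕ → Ω → ℝ) (hmeas : ∀ k, Measurable (X k))
    (hindep : ProbabilityTheory.iIndepFun X P)
    (hident : ∀ k, ProbabilityTheory.IdentDistrib (X k) (X 0) P P)
    (D : ℝ) (hD : 0 < D) (hmean : ∫ ω, X 0 ω ∂P = -D)
    (μ : ℝ) (hμ : 0 < μ)
    (τ : Ω → ℕ)
    (hτ : ∀ ω, τ ω = sInf {n | 1 ≤ n ∧ ∑ k ∈ Finset.range n, X k ω < 0})
    (hτint : Integrable (fun ω => (τ ω : ℝ)) P)
    (hSint : Integrable (fun ω => |∑ k ∈ Finset.range (τ ω), X k ω|) P)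
    (hτpos : 0 < ∫ ω, (τ ω : ℝ) ∂P)
    (V : Ω → ℕ)
    (hV : ∀ ω, V ω = ⌈|∑ k ∈ Finset.range (τ ω), X k ω| / μ⌉₊)
    (hVint : Integrable (fun ω => (V ω : ℝ)) P) :
    (∫ ω, (τ ω : ℝ) ∂P) / ((∫ ω, (τ ω : ℝ) ∂P) + ∫ ω, (V ω : ℝ) ∂P) ≤ μ / (μ + D) :=
  stmt_9_general P X hmeas hindep hident D hD hmean μ hμ τ hτ hτint hSint V hV hVint
end

section
/- Let $X_1, X_2, \dots$ be i.i.d. with $\mathbb{E}[X_1] = D > 0$ and finite variance. Define the CuSum recursion $C_0 = 0$, $C_{n+1} = \max\{0, C_n + X_{n+1}\}$, and the hitting time $\tau_C(A) = \inf\{n \geq 1 : C_n > A\}$. Then $\mathbb{E}[\tau_C(A)] \leq \frac{A}{D}(1 + o(1))$ as $A \to \infty$; more precisely, $\limsup_{A \to \infty} \frac{\mathbb{E}[\tau_C(A)]}{A} \leq \frac{1}{D}$. -/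
/-!
Truncate the increments: `Yₖ = min Xₖ M` still satisfies `C (n+1) ≥ C n + Y (n+1)`, so the sum of
the `Yₖ` up to the first passage time `ρ` (stopped at a horizon) is at most
`C (ρ - 1) + M ≤ A + M`. Wald's identity, i.e. optional stopping for the martingale
`∑ₖ (Yₖ - 𝔼 Y)`, turns this into `𝔼[Y] 𝔼[ρ] ≤ A + M`; letting the horizon grow gives
`𝔼[τ(A)] ≤ (A + M) / 𝔼[min X M]`, hence `limsup 𝔼[τ(A)] / A ≤ 1 / 𝔼[min X M]`, and
`𝔼[min X M] → D` as `M → ∞`.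
-/

open MeasureTheory Filter ProbabilityTheory Finset
open scoped Topology

section

variable {Ω : Type*} {m0 : MeasurableSpace Ω} {μ : Measure Ω}

section Deterministic

lemma add_sum_range_le_of_add_le_succ {c y : ℕ → ℝ} (hc : ∀ n, c n + y (n + 1) ≤ c (n + 1))
    (n : ℕ) : c 0 + ∑ k ∈ range n, y (k + 1) ≤ c n := by
  induction n with
  | zero => simp
  | succ n ih => rw [sum_range_succ, ← add_assoc]; linarith [hc n]

variable {c y : ℕ → Ω → ℝ} {ω : Ω}

lemma sum_range_hittingBtwn_le {A M : ℝ} (hA : 0 ≤ A) (h0 : c 0 ω = 0)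
    (hc : ∀ n, c n ω + y (n + 1) ω ≤ c (n + 1) ω) (hy : ∀ n, y n ω ≤ M) {N : ℕ} (hN : 1 ≤ N) :
    ∑ k ∈ range (hittingBtwn c (Set.Ioi A) 1 N ω), y (k + 1) ω ≤ A + M := by
  obtain ⟨r, hr⟩ : ∃ r, hittingBtwn c (Set.Ioi A) 1 N ω = r + 1 :=
    Nat.exists_eq_add_one.mpr (le_hittingBtwn hN ω)
  have hcr : c r ω ≤ A := by
    rcases Nat.eq_zero_or_pos r with rfl | hr0
    · rw [h0]; exact hA
    · exact not_lt.mp (notMem_of_lt_hittingBtwn (hr ▸ r.lt_add_one) hr0)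
  rw [hr, sum_range_succ]
  linarith [add_sum_range_le_of_add_le_succ (c := (c · ω)) (y := (y · ω)) hc r, hy (r + 1)]

lemma min_sInf_le_hittingBtwn {s : Set ℝ} {n₀ : ℕ} (N : ℕ) :
    min (sInf {n | n₀ ≤ n ∧ c n ω ∈ s}) N ≤ hittingBtwn c s n₀ N ω := by
  rcases lt_or_ge (hittingBtwn c s n₀ N ω) N with hlt | hge
  · refine min_le_of_left_le (Nat.sInf_le ⟨?_, hittingBtwn_mem_set_of_hittingBtwn_lt hlt⟩)
    have hn₀ : n₀ ≤ N := by
      by_contra! h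
      exact hlt.ne (hittingBtwn_of_lt h)
    exact le_hittingBtwn hn₀ ω
  · exact min_le_of_right_le hge

end Deterministic

section Wald

variable {ℱ : Filtration ℕ m0} {Y : ℕ → Ω → ℝ} {m : ℝ} {ρ : Ω → ℕ} {N : ℕ}

lemma integrable_natCast_of_isStoppingTime [IsFiniteMeasure μ]
    (hρ : IsStoppingTime ℱ (fun ω => (ρ ω : WithTop ℕ))) (hbdd : ∀ ω, ρ ω ≤ N) :
    Integrable (fun ω => (ρ ω : ℝ)) μ :=
  integrable_stoppedValue ℕ (u := fun n _ => (n : ℝ)) hρ (fun _ => integrable_const _)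
    fun ω => WithTop.coe_le_coe.mpr (hbdd ω)

lemma integrable_sum_range_of_isStoppingTime (hint : ∀ k, Integrable (Y k) μ)
    (hρ : IsStoppingTime ℱ (fun ω => (ρ ω : WithTop ℕ))) (hbdd : ∀ ω, ρ ω ≤ N) :
    Integrable (fun ω => ∑ k ∈ range (ρ ω), Y (k + 1) ω) μ :=
  integrable_stoppedValue ℕ (u := fun n ω => ∑ k ∈ range n, Y (k + 1) ω) hρ
    (fun _ => integrable_finsetSum _ fun _ _ => hint _) fun ω => WithTop.coe_le_coe.mpr (hbdd ω)

lemma martingale_sum_range_sub [IsFiniteMeasure μ] (hY : StronglyAdapted ℱ Y)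
    (hint : ∀ k, Integrable (Y k) μ) (hcond : ∀ k, μ[Y (k + 1) | ℱ k] =ᵐ[μ] fun _ => m) :
    Martingale (fun n ω => ∑ k ∈ range n, (Y (k + 1) ω - m)) ℱ μ := by
  refine martingale_of_condExp_sub_eq_zero_nat (fun n => ?_) (fun n => ?_) fun n => ?_
  · refine Finset.stronglyMeasurable_fun_sum _ fun k hk => ?_
    exact ((hY (k + 1)).mono (ℱ.mono (by simpa using hk))).sub stronglyMeasurable_const
  · exact integrable_finsetSum _ fun k _ => (hint _).sub (integrable_const m)
  · have hincr : (fun ω => ∑ k ∈ range (n + 1), (Y (k + 1) ω - m)) -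
        (fun ω => ∑ k ∈ range n, (Y (k + 1) ω - m)) = Y (n + 1) - fun _ => m := by
      ext ω; simp only [Pi.sub_apply, sum_range_succ]; ring
    rw [hincr]
    filter_upwards [condExp_sub (hint (n + 1)) (integrable_const m) (ℱ n), hcond n] with ω h1 h2
    simp [h1, h2, condExp_const (ℱ.le n)]

/-- Wald's identity. -/
theorem integral_sum_range_of_isStoppingTime [IsFiniteMeasure μ] (hY : StronglyAdapted ℱ Y)
    (hint : ∀ k, Integrable (Y k) μ) (hcond : ∀ k, μ[Y (k + 1) | ℱ k] =ᵐ[μ] fun _ => m)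
    (hρ : IsStoppingTime ℱ (fun ω => (ρ ω : WithTop ℕ))) (hbdd : ∀ ω, ρ ω ≤ N) :
    ∫ ω, ∑ k ∈ range (ρ ω), Y (k + 1) ω ∂μ = m * ∫ ω, (ρ ω : ℝ) ∂μ := by
  set f : ℕ → Ω → ℝ := fun n ω => ∑ k ∈ range n, (Y (k + 1) ω - m)
  have hf : Martingale f ℱ μ := martingale_sum_range_sub hY hint hcond
  have hopt {g : ℕ → Ω → ℝ} (hg : Martingale g ℱ μ) :
      ∫ ω, g 0 ω ∂μ ≤ ∫ ω, stoppedValue g (fun ω => (ρ ω : WithTop ℕ)) ω ∂μ :=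
    hg.submartingale.expected_stoppedValue_mono (isStoppingTime_const ℱ 0) hρ
      (fun ω => WithTop.coe_le_coe.mpr (ρ ω).zero_le) fun ω => WithTop.coe_le_coe.mpr (hbdd ω)
  have hzero : ∫ ω, stoppedValue f (fun ω => (ρ ω : WithTop ℕ)) ω ∂μ = 0 := by
    have h1 := hopt hf
    have h2 := hopt hf.neg
    simp only [f, Pi.neg_apply, range_zero, sum_empty, neg_zero, integral_zero, integral_neg,
      show stoppedValue (-f) (fun ω => (ρ ω : WithTop ℕ)) =
        -stoppedValue f (fun ω => (ρ ω : WithTop ℕ)) from rfl] at h1 h2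
    linarith
  have hsv : stoppedValue f (fun ω => (ρ ω : WithTop ℕ)) =
      fun ω => ∑ k ∈ range (ρ ω), Y (k + 1) ω - ρ ω * m := by
    ext ω; simp only [f, stoppedValue, sum_sub_distrib, sum_const, card_range, nsmul_eq_mul]; rfl
  rw [hsv, integral_sub (integrable_sum_range_of_isStoppingTime hint hρ hbdd)
    ((integrable_natCast_of_isStoppingTime hρ hbdd).mul_const m), integral_mul_const] at hzero
  linarith

end Wald

theorem ProbabilityTheory.iIndepFun.condExp_natural_comp_ae_eq_of_lt {ι β : Type*} [LinearOrder ι]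
    [MeasurableSpace β] [NormedAddCommGroup β] [BorelSpace β] {X : ι → Ω → β}
    (hX : ∀ i, StronglyMeasurable (X i)) (hind : iIndepFun X μ) {g : β → ℝ} (hg : Measurable g)
    {i j : ι} (hij : i < j) :
    μ[fun ω => g (X j ω) | Filtration.natural X hX i] =ᵐ[μ] fun _ => ∫ ω, g (X j ω) ∂μ := by
  have := hind.isProbabilityMeasure
  exact condExp_indep_eq (hX j).measurable.comap_le (Filtration.le _ _)
    (hg.comp (comap_measurable (X j))).stronglyMeasurable (hind.indep_comap_natural_of_lt hX hij)

lemma adapted_of_eq_max_zero_add {ℱ : Filtration ℕ m0} {C X : ℕ → Ω → ℝ}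
    (hX : Adapted ℱ X) (hC0 : ∀ ω, C 0 ω = 0)
    (hC : ∀ n ω, C (n + 1) ω = max 0 (C n ω + X (n + 1) ω)) :
    Adapted ℱ C := by
  intro n
  induction n with
  | zero => simp only [show C 0 = fun _ => 0 from funext hC0]; exact measurable_const
  | succ n ih =>
    simp only [show C (n + 1) = fun ω => max 0 (C n ω + X (n + 1) ω) from funext (hC n)]
    exact measurable_const.max ((ih.mono (ℱ.mono n.le_succ) le_rfl).add (hX (n + 1)))

lemma tendsto_integral_min_natCast {f : Ω → ℝ} (hf : Integrable f μ) :
    Tendsto (fun N : ℕ => ∫ ω, min (f ω) N ∂μ) atTop (𝓝 (∫ ω, f ω ∂μ)) := by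
  refine integral_tendsto_of_tendsto_of_monotone (fun N => ?_) hf ?_ ?_
  · refine hf.mono (hf.aestronglyMeasurable.inf aestronglyMeasurable_const)
      (ae_of_all _ fun ω => ?_)
    simp only [Real.norm_eq_abs]
    rcases le_total (f ω) N with h | h
    · rw [min_eq_left h]
    · rw [min_eq_right h, abs_of_nonneg N.cast_nonneg, abs_of_nonneg (N.cast_nonneg.trans h)]
      exact h
  · exact ae_of_all _ fun ω a b hab => min_le_min_left _ (Nat.cast_le.mpr hab)
  · refine ae_of_all _ fun ω => tendsto_atTop_of_eventually_const (i₀ := ⌈f ω⌉₊) fun N hN => ?_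
    exact min_eq_left ((Nat.le_ceil _).trans (Nat.cast_le.mpr hN))

lemma integral_le_of_forall_integral_min_natCast_le {f : Ω → ℝ} {B : ℝ} (hf : ∀ ω, 0 ≤ f ω)
    (h : ∀ N : ℕ, ∫ ω, min (f ω) N ∂μ ≤ B) : ∫ ω, f ω ∂μ ≤ B := by
  by_cases hfi : Integrable f μ
  · exact le_of_tendsto' (tendsto_integral_min_natCast hfi) h
  · simpa [integral_undef hfi, min_eq_right (hf _)] using h 0

theorem integral_firstPassageTime_le_div [IsProbabilityMeasure μ] {ℱ : Filtration ℕ m0}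
    {C Y : ℕ → Ω → ℝ} {m A M : ℝ} (hC : Adapted ℱ C) (hC0 : ∀ ω, C 0 ω = 0)
    (hCY : ∀ n ω, C n ω + Y (n + 1) ω ≤ C (n + 1) ω) (hY : StronglyAdapted ℱ Y)
    (hint : ∀ k, Integrable (Y k) μ) (hcond : ∀ k, μ[Y (k + 1) | ℱ k] =ᵐ[μ] fun _ => m)
    (hm : 0 < m) (hYM : ∀ n ω, Y n ω ≤ M) (hA : 0 ≤ A) :
    ∫ ω, ((sInf {n | 1 ≤ n ∧ A < C n ω} : ℕ) : ℝ) ∂μ ≤ (A + M) / m := by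
  refine integral_le_of_forall_integral_min_natCast_le (fun ω => Nat.cast_nonneg _) fun N => ?_
  set ρ := hittingBtwn C (Set.Ioi A) 1 (N + 1)
  have hρ : IsStoppingTime ℱ (fun ω => (ρ ω : WithTop ℕ)) :=
    hC.isStoppingTime_hittingBtwn measurableSet_Ioi
  have hρN : ∀ ω, ρ ω ≤ N + 1 := fun ω => hittingBtwn_le ω
  have hmin : ∀ ω, min ((sInf {n | 1 ≤ n ∧ A < C n ω} : ℕ) : ℝ) N ≤ ρ ω := fun ω => by
    rw [← Nat.cast_min]
    exact Nat.cast_le.mpr <| (min_le_min_left _ N.le_succ).trans <|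
      min_sInf_le_hittingBtwn (c := C) (s := Set.Ioi A) (n₀ := 1) (N + 1)
  calc ∫ ω, min ((sInf {n | 1 ≤ n ∧ A < C n ω} : ℕ) : ℝ) N ∂μ ≤ ∫ ω, (ρ ω : ℝ) ∂μ :=
        integral_mono_of_nonneg (ae_of_all _ fun ω => by positivity)
          (integrable_natCast_of_isStoppingTime hρ hρN) (ae_of_all _ hmin)
    _ ≤ (A + M) / m := by
      rw [le_div_iff₀ hm, mul_comm, ← integral_sum_range_of_isStoppingTime hY hint hcond hρ hρN]
      calc ∫ ω, ∑ k ∈ range (ρ ω), Y (k + 1) ω ∂μ ≤ ∫ _, A + M ∂μ :=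
            integral_mono (integrable_sum_range_of_isStoppingTime hint hρ hρN)
              (integrable_const _) fun ω =>
                sum_range_hittingBtwn_le hA (hC0 ω) (hCY · ω) (hYM · ω) N.succ_pos
        _ = A + M := by simp

lemma limsup_div_le_of_le_add_div {f : ℝ → ℝ} {m M : ℝ} (hm : 0 < m)
    (hf : ∀ A, 0 ≤ A → 0 ≤ f A) (hle : ∀ A, 0 ≤ A → f A ≤ (A + M) / m) :
    limsup (fun A => f A / A) atTop ≤ 1 / m := by
  have hlim : Tendsto (fun A => (A + M) / m / A) atTop (𝓝 (1 / m)) := by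
    have := tendsto_const_nhds (x := 1 / m).add (tendsto_inv_atTop_zero.const_mul (M / m))
    rw [mul_zero, add_zero] at this
    refine this.congr' ((eventually_gt_atTop 0).mono fun A hA => ?_)
    field_simp
  calc limsup (fun A => f A / A) atTop ≤ limsup (fun A => (A + M) / m / A) atTop :=
        limsup_le_limsup ((eventually_gt_atTop 0).mono fun A hA =>
            div_le_div_of_nonneg_right (hle A hA.le) hA.le)
          (isCoboundedUnder_le_of_eventually_le atTop ((eventually_ge_atTop 0).mono fun A hA =>
            div_nonneg (hf A hA) hA))
          hlim.isBoundedUnder_le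
    _ = 1 / m := hlim.limsup_eq

end

theorem stmt_15_general {Ω : Type*} [MeasurableSpace Ω] (P : Measure Ω) [IsProbabilityMeasure P]
    (X : ℕ → Ω → ℝ) (hmeas : ∀ k, Measurable (X k))
    (hindep : ProbabilityTheory.iIndepFun X P)
    (hident : ∀ k, ProbabilityTheory.IdentDistrib (X k) (X 0) P P)
    (D : ℝ) (hD : 0 < D) (hmean : ∫ ω, X 0 ω ∂P = D)
    (C : ℕ → Ω → ℝ) (hC0 : ∀ ω, C 0 ω = 0)
    (hC : ∀ n ω, C (n + 1) ω = max 0 (C n ω + X (n + 1) ω))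
    (τ : ℝ → Ω → ℕ)
    (hτ : ∀ A ω, τ A ω = sInf {n | 1 ≤ n ∧ A < C n ω}) :
    limsup (fun A : ℝ => (∫ ω, (τ A ω : ℝ) ∂P) / A) atTop ≤ 1 / D := by
  have hint : Integrable (X 0) P := by
    by_contra h
    exact hD.ne (integral_undef h ▸ hmean)
  set ℱ := Filtration.natural X fun k => (hmeas k).stronglyMeasurable
  have hXℱ : Adapted ℱ X := (Filtration.stronglyAdapted_natural _).adapted
  have htrunc : ∀ M : ℕ, 0 < ∫ ω, min (X 0 ω) M ∂P →
      limsup (fun A : ℝ => (∫ ω, (τ A ω : ℝ) ∂P) / A) atTop ≤ 1 / ∫ ω, min (X 0 ω) M ∂P := by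
    intro M hM
    have hid : ∀ k, IdentDistrib (fun ω => min (X k ω) M) (fun ω => min (X 0 ω) M) P P :=
      fun k => (hident k).comp (measurable_id.min measurable_const)
    refine limsup_div_le_of_le_add_div (M := M) hM
      (fun A _ => integral_nonneg fun ω => Nat.cast_nonneg _) fun A hA => ?_
    simp only [hτ]
    refine integral_firstPassageTime_le_div (adapted_of_eq_max_zero_add hXℱ hC0 hC) hC0
      (fun n ω => ?_) (fun k => ((hXℱ k).min measurable_const).stronglyMeasurable)
      (fun k => (hid k).integrable_iff.mpr (hint.inf (integrable_const _))) (fun k => ?_) hM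
      (fun _ _ => min_le_right _ _) hA
    · rw [hC]
      exact le_max_of_le_right (by linarith [min_le_left (X (n + 1) ω) M])
    · rw [← (hid (k + 1)).integral_eq]
      exact hindep.condExp_natural_comp_ae_eq_of_lt _ (measurable_id.min measurable_const)
        k.lt_succ_self
  have hlim := tendsto_integral_min_natCast hint
  rw [hmean] at hlim
  exact ge_of_tendsto (tendsto_const_nhds.div hlim hD.ne')
    ((hlim.eventually (eventually_gt_nhds hD)).mono htrunc)

/-- First-order delay asymptotics for the CuSum stopping time: for i.i.d. increments
with mean `D > 0` and finite variance, the CuSum recursion `C₀ = 0`,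
`C_{n+1} = max {0, C_n + X_{n+1}}` and hitting time `τ_C(A) = inf{n ≥ 1 : C_n > A}`
satisfy `limsup_{A → ∞} 𝔼[τ_C(A)] / A ≤ 1 / D`. -/
theorem stmt_15 {Ω : Type*} [MeasurableSpace Ω] (P : Measure Ω) [IsProbabilityMeasure P]
    (X : ℕ → Ω → ℝ) (hmeas : ∀ k, Measurable (X k))
    (hindep : ProbabilityTheory.iIndepFun X P)
    (hident : ∀ k, ProbabilityTheory.IdentDistrib (X k) (X 0) P P)
    (D : ℝ) (hD : 0 < D) (hmean : ∫ ω, X 0 ω ∂P = D)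
    (hL2 : Integrable (fun ω => (X 0 ω) ^ 2) P)
    (C : ℕ → Ω → ℝ) (hC0 : ∀ ω, C 0 ω = 0)
    (hC : ∀ n ω, C (n + 1) ω = max 0 (C n ω + X (n + 1) ω))
    (τ : ℝ → Ω → ℕ)
    (hτ : ∀ A ω, τ A ω = sInf {n | 1 ≤ n ∧ A < C n ω}) :
    limsup (fun A : ℝ => (∫ ω, (τ A ω : ℝ) ∂P) / A) atTop ≤ 1 / D :=
  stmt_15_general P X hmeas hindep hident D hD hmean C hC0 hC τ hτ
end
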